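/- Let γ̂, λ > 0, ε ∈ ℝ, T > 0, and let B̃, B̃′ : [0, T] → ℝ be continuous bounded functions. Let C^{B̃}(t) = −(ε/2) ∫ₜᵀ B̃(s)² exp(∫ₜˢ F^{B̃}(r) dr) ds and similarly for C^{B̃′}. Then ‖C^{B̃} − C^{B̃′}‖_∞ ≤ (|ε| T/2) ( 1 + (γ̂ T²/λ) ‖B̃′‖_∞² ) ( ‖B̃‖_∞ + ‖B̃′‖_∞ ) ‖B̃ − B̃′‖_∞. -/

import Mathlib

open Set

noncomputable def supNorm (T : ℝ) (f : ℝ → ℝ) : ℝ :=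
  sSup ((fun t => |f t|) '' Icc 0 T)

/-! Both `F` and `F - F'` solve backward linear equations `H' = h - k H`, `H T = 0`, whose
solution is `H t = -∫ₜᵀ h s exp (∫ₜˢ k) ds`. For `F` (with `h = γ̂ B̃² / λ ≥ 0`, `k = F`) this
gives `F ≤ 0`; for `F - F'` (with `h = γ̂ (B̃² - B̃'²) / λ`, `k = F + F' ≤ 0`) the exponential
is at most `1`, so `|F - F'| ≤ γ̂ T (‖B̃‖ + ‖B̃'‖) ‖B̃ - B̃'‖ / λ`. Finally
`B̃² e^X - B̃'² e^X' = (B̃² - B̃'²) e^X + B̃'² (e^X - e^X')`, and `exp` is `1`-Lipschitz on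
`(-∞, 0]`. -/

open Real intervalIntegral

theorem abs_le_supNorm {T : ℝ} {f : ℝ → ℝ} (hf : ContinuousOn f (Icc 0 T)) {t : ℝ}
    (ht : t ∈ Icc 0 T) : |f t| ≤ supNorm T f :=
  le_csSup (isCompact_Icc.bddAbove_image hf.abs) (mem_image_of_mem _ ht)

theorem supNorm_nonneg (T : ℝ) (f : ℝ → ℝ) : 0 ≤ supNorm T f :=
  Real.sSup_nonneg (by rintro _ ⟨t, -, rfl⟩; exact abs_nonneg _)

theorem supNorm_le {T c : ℝ} (hT : 0 ≤ T) {f : ℝ → ℝ} (h : ∀ t ∈ Icc 0 T, |f t| ≤ c) :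
    supNorm T f ≤ c :=
  csSup_le ((nonempty_Icc.2 hT).image _) (by rintro _ ⟨t, ht, rfl⟩; exact h t ht)

theorem abs_sq_sub_sq_le_supNorm {T : ℝ} {f g : ℝ → ℝ} (hf : ContinuousOn f (Icc 0 T))
    (hg : ContinuousOn g (Icc 0 T)) {t : ℝ} (ht : t ∈ Icc 0 T) :
    |f t ^ 2 - g t ^ 2| ≤ (supNorm T f + supNorm T g) * supNorm T (fun u => f u - g u) := by
  rw [sq_sub_sq, abs_mul]
  gcongr
  · exact add_nonneg (supNorm_nonneg T f) (supNorm_nonneg T g)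
  · exact (abs_add_le _ _).trans (add_le_add (abs_le_supNorm hf ht) (abs_le_supNorm hg ht))
  · exact abs_le_supNorm (hf.sub hg) ht

theorem abs_exp_sub_exp_le_of_nonpos {x y : ℝ} (hx : x ≤ 0) (hy : y ≤ 0) :
    |exp x - exp y| ≤ |x - y| := by
  wlog hxy : x ≤ y generalizing x y
  · rw [abs_sub_comm, abs_sub_comm x]
    exact this hy hx (le_of_not_ge hxy)
  rw [abs_of_nonpos (sub_nonpos.2 (exp_le_exp.2 hxy)), abs_of_nonpos (sub_nonpos.2 hxy),
    neg_sub, neg_sub]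
  calc exp y - exp x = exp y * (1 - exp (x - y)) := by rw [mul_sub, ← exp_add]; ring_nf
    _ ≤ 1 * (y - x) := by
      refine mul_le_mul (exp_le_one_iff.2 hy) ?_ ?_ zero_le_one
      · linarith [add_one_le_exp (x - y)]
      · exact sub_nonneg.2 (exp_le_one_iff.2 (by linarith))
    _ = y - x := one_mul _

theorem abs_mul_exp_sub_mul_exp_le {p p' x x' : ℝ} (hp' : 0 ≤ p') (hx : x ≤ 0) (hx' : x' ≤ 0) :
    |p * exp x - p' * exp x'| ≤ |p - p'| + p' * |x - x'| :=
  calc |p * exp x - p' * exp x'| = |(p - p') * exp x + p' * (exp x - exp x')| := by ring_nf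
    _ ≤ |p - p'| * exp x + p' * |exp x - exp x'| := by
      refine (abs_add_le _ _).trans_eq ?_
      rw [abs_mul, abs_mul, abs_of_pos (exp_pos x), abs_of_nonneg hp']
    _ ≤ |p - p'| * 1 + p' * |x - x'| := by
      exact add_le_add (mul_le_mul_of_nonneg_left (exp_le_one_iff.2 hx) (abs_nonneg _))
        (mul_le_mul_of_nonneg_left (abs_exp_sub_exp_le_of_nonpos hx hx') hp')
    _ = |p - p'| + p' * |x - x'| := by rw [mul_one]

theorem abs_integral_le_mul_sub {f : ℝ → ℝ} {a b M : ℝ} (hab : a ≤ b)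
    (h : ∀ x ∈ Icc a b, |f x| ≤ M) : |∫ x in a..b, f x| ≤ M * (b - a) := by
  have := norm_integral_le_of_norm_le_const (f := f) (C := M) fun x hx =>
    h x (Ioc_subset_Icc_self (uIoc_of_le hab ▸ hx))
  rwa [abs_of_nonneg (sub_nonneg.2 hab)] at this

theorem integral_nonpos_of_nonpos_on {k : ℝ → ℝ} {a b : ℝ} (hab : a ≤ b)
    (hk : ∀ x ∈ Icc a b, k x ≤ 0) : ∫ x in a..b, k x ≤ 0 := by
  simpa [integral_neg] using integral_nonneg hab fun x hx => neg_nonneg.2 (hk x hx)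

theorem continuousOn_mul_exp_primitive {p k : ℝ → ℝ} {a b : ℝ} (hab : a ≤ b)
    (hp : ContinuousOn p (Icc a b)) (hk : ContinuousOn k (Icc a b)) :
    ContinuousOn (fun s => p s * exp (∫ r in a..s, k r)) (Icc a b) := by
  refine hp.mul (ContinuousOn.rexp ?_)
  have := continuousOn_primitive_interval'
    (hk.intervalIntegrable_of_Icc (μ := MeasureTheory.volume) hab) left_mem_uIcc
  rwa [uIcc_of_le hab] at this

section LinearBackward

variable {a b : ℝ} {h k H : ℝ → ℝ}

theorem hasDerivAt_of_eq_neg_integral {φ : ℝ → ℝ} (hφ : ContinuousOn φ (Icc a b))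
    (hH : ∀ t ∈ Icc a b, H t = -∫ s in t..b, φ s) {x : ℝ} (hx : x ∈ Ioo a b) :
    HasDerivAt H (φ x) x := by
  have hderiv := (integral_hasDerivAt_left
    ((hφ.mono (Icc_subset_Icc_left hx.1.le)).intervalIntegrable_of_Icc hx.2.le)
    ((hφ.mono Ioo_subset_Icc_self).stronglyMeasurableAtFilter isOpen_Ioo x hx)
    (hφ.continuousAt (Icc_mem_nhds hx.1 hx.2))).neg
  rw [neg_neg] at hderiv
  refine hderiv.congr_of_eventuallyEq ?_
  filter_upwards [Ioo_mem_nhds hx.1 hx.2] with y hy using hH y (Ioo_subset_Icc_self hy)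

theorem eq_neg_integral_mul_exp_of_eq_neg_integral (hh : ContinuousOn h (Icc a b))
    (hk : ContinuousOn k (Icc a b)) (hHc : ContinuousOn H (Icc a b))
    (hH : ∀ t ∈ Icc a b, H t = -∫ s in t..b, (h s - k s * H s)) {t : ℝ} (ht : t ∈ Icc a b) :
    H t = -∫ s in t..b, h s * exp (∫ r in t..s, k r) := by
  have hsub : Icc t b ⊆ Icc a b := Icc_subset_Icc_left ht.1
  have hHb : H b = 0 := by simpa using hH b ⟨ht.1.trans ht.2, le_rfl⟩
  have hFTC := integral_eq_sub_of_hasDerivAt_of_le ht.2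
    (continuousOn_mul_exp_primitive ht.2 (hHc.mono hsub) (hk.mono hsub))
    (fun x hx => by
      have hxab : x ∈ Ioo a b := ⟨ht.1.trans_lt hx.1, hx.2⟩
      have hE := (integral_hasDerivAt_right
        ((hk.mono (Icc_subset_Icc ht.1 hx.2.le)).intervalIntegrable_of_Icc hx.1.le)
        ((hk.mono Ioo_subset_Icc_self).stronglyMeasurableAtFilter isOpen_Ioo x hxab)
        (hk.continuousAt (Icc_mem_nhds hxab.1 hxab.2))).exp
      refine ((hasDerivAt_of_eq_neg_integral (φ := fun s => h s - k s * H s)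
        (hh.sub (hk.mul hHc)) hH hxab).mul hE).congr_deriv ?_
      ring)
    ((continuousOn_mul_exp_primitive ht.2 (hh.mono hsub) (hk.mono hsub)).intervalIntegrable_of_Icc
      ht.2)
  simp only [hHb, zero_mul, integral_same, exp_zero, mul_one, zero_sub] at hFTC
  rw [hFTC, neg_neg]

theorem nonpos_of_eq_neg_integral (hh : ContinuousOn h (Icc a b)) (hk : ContinuousOn k (Icc a b))
    (hHc : ContinuousOn H (Icc a b)) (hH : ∀ t ∈ Icc a b, H t = -∫ s in t..b, (h s - k s * H s))
    (hh0 : ∀ s ∈ Icc a b, 0 ≤ h s) {t : ℝ} (ht : t ∈ Icc a b) : H t ≤ 0 := by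
  rw [eq_neg_integral_mul_exp_of_eq_neg_integral hh hk hHc hH ht, neg_nonpos]
  exact integral_nonneg ht.2 fun s hs =>
    mul_nonneg (hh0 s ⟨ht.1.trans hs.1, hs.2⟩) (exp_pos _).le

theorem abs_le_of_eq_neg_integral (hh : ContinuousOn h (Icc a b)) (hk : ContinuousOn k (Icc a b))
    (hHc : ContinuousOn H (Icc a b)) (hH : ∀ t ∈ Icc a b, H t = -∫ s in t..b, (h s - k s * H s))
    (hk0 : ∀ s ∈ Icc a b, k s ≤ 0) {M : ℝ} (hM : ∀ s ∈ Icc a b, |h s| ≤ M) {t : ℝ}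
    (ht : t ∈ Icc a b) : |H t| ≤ M * (b - a) := by
  rw [eq_neg_integral_mul_exp_of_eq_neg_integral hh hk hHc hH ht, abs_neg]
  have hM0 : 0 ≤ M := (abs_nonneg _).trans (hM t ht)
  calc |∫ s in t..b, h s * exp (∫ r in t..s, k r)| ≤ M * (b - t) := by
        refine abs_integral_le_mul_sub ht.2 fun s hs => ?_
        have hexp : exp (∫ r in t..s, k r) ≤ 1 := exp_le_one_iff.2 <|
          integral_nonpos_of_nonpos_on hs.1 fun r hr => hk0 r ⟨ht.1.trans hr.1, hr.2.trans hs.2⟩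
        rw [abs_mul, abs_of_pos (exp_pos _)]
        exact (mul_le_of_le_one_right (abs_nonneg _) hexp).trans (hM s ⟨ht.1.trans hs.1, hs.2⟩)
    _ ≤ M * (b - a) := by gcongr; exact ht.1

end LinearBackward

section Riccati

variable {a b : ℝ} {q q' F F' : ℝ → ℝ}

theorem riccati_nonpos (hq : ContinuousOn q (Icc a b)) (hq0 : ∀ s ∈ Icc a b, 0 ≤ q s)
    (hFc : ContinuousOn F (Icc a b)) (hF : ∀ t ∈ Icc a b, F t = -∫ s in t..b, (q s - F s ^ 2))
    {t : ℝ} (ht : t ∈ Icc a b) : F t ≤ 0 :=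
  nonpos_of_eq_neg_integral hq hFc hFc (by simpa only [sq] using hF) hq0 ht

theorem riccati_abs_sub_le (hq : ContinuousOn q (Icc a b)) (hq' : ContinuousOn q' (Icc a b))
    (hFc : ContinuousOn F (Icc a b)) (hF'c : ContinuousOn F' (Icc a b))
    (hF : ∀ t ∈ Icc a b, F t = -∫ s in t..b, (q s - F s ^ 2))
    (hF' : ∀ t ∈ Icc a b, F' t = -∫ s in t..b, (q' s - F' s ^ 2))
    (hF0 : ∀ s ∈ Icc a b, F s ≤ 0) (hF'0 : ∀ s ∈ Icc a b, F' s ≤ 0)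
    {M : ℝ} (hM : ∀ s ∈ Icc a b, |q s - q' s| ≤ M) {t : ℝ} (ht : t ∈ Icc a b) :
    |F t - F' t| ≤ M * (b - a) := by
  refine abs_le_of_eq_neg_integral (h := fun s => q s - q' s) (k := fun s => F s + F' s)
    (H := fun s => F s - F' s) (hq.sub hq') (hFc.add hF'c) (hFc.sub hF'c) (fun u hu => ?_)
    (fun s hs => add_nonpos (hF0 s hs) (hF'0 s hs)) hM ht
  have hsub : Icc u b ⊆ Icc a b := Icc_subset_Icc_left hu.1
  have hi : IntervalIntegrable (fun s => q s - F s ^ 2) MeasureTheory.volume u b :=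
    ((hq.sub (hFc.pow 2)).mono hsub).intervalIntegrable_of_Icc hu.2
  have hi' : IntervalIntegrable (fun s => q' s - F' s ^ 2) MeasureTheory.volume u b :=
    ((hq'.sub (hF'c.pow 2)).mono hsub).intervalIntegrable_of_Icc hu.2
  rw [hF u hu, hF' u hu, ← neg_sub', ← integral_sub hi hi']
  congr 1
  exact integral_congr fun s _ => by ring

theorem riccati_abs_sub_le_supNorm {T c : ℝ} (hc : 0 ≤ c) {B B' F F' : ℝ → ℝ}
    (hB : ContinuousOn B (Icc 0 T)) (hB' : ContinuousOn B' (Icc 0 T))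
    (hFc : ContinuousOn F (Icc 0 T)) (hF'c : ContinuousOn F' (Icc 0 T))
    (hF : ∀ t ∈ Icc 0 T, F t = -∫ s in t..T, (c * B s ^ 2 - F s ^ 2))
    (hF' : ∀ t ∈ Icc 0 T, F' t = -∫ s in t..T, (c * B' s ^ 2 - F' s ^ 2)) {t : ℝ}
    (ht : t ∈ Icc 0 T) :
    |F t - F' t| ≤ c * ((supNorm T B + supNorm T B') * supNorm T (fun u => B u - B' u)) * T := by
  have hq : ContinuousOn (fun s => c * B s ^ 2) (Icc 0 T) := continuousOn_const.mul (hB.pow 2)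
  have hq' : ContinuousOn (fun s => c * B' s ^ 2) (Icc 0 T) := continuousOn_const.mul (hB'.pow 2)
  have hM : ∀ u ∈ Icc 0 T, |c * B u ^ 2 - c * B' u ^ 2|
      ≤ c * ((supNorm T B + supNorm T B') * supNorm T (fun u => B u - B' u)) := fun u hu => by
    rw [← mul_sub, abs_mul, abs_of_nonneg hc]
    exact mul_le_mul_of_nonneg_left (abs_sq_sub_sq_le_supNorm hB hB' hu) hc
  simpa using riccati_abs_sub_le hq hq' hFc hF'c hF hF'
    (fun s hs => riccati_nonpos hq (fun _ _ => by positivity) hFc hF hs)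
    (fun s hs => riccati_nonpos hq' (fun _ _ => by positivity) hF'c hF' hs) hM ht

end Riccati

theorem abs_integral_mul_exp_sub_le {a b A P D : ℝ} {g g' k k' : ℝ → ℝ} (hab : a ≤ b)
    (hg : ContinuousOn g (Icc a b)) (hg' : ContinuousOn g' (Icc a b))
    (hk : ContinuousOn k (Icc a b)) (hk' : ContinuousOn k' (Icc a b))
    (hk0 : ∀ s ∈ Icc a b, k s ≤ 0) (hk'0 : ∀ s ∈ Icc a b, k' s ≤ 0)
    (hg'0 : ∀ s ∈ Icc a b, 0 ≤ g' s) (hP : ∀ s ∈ Icc a b, g' s ≤ P)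
    (hA : ∀ s ∈ Icc a b, |g s - g' s| ≤ A) (hD : ∀ s ∈ Icc a b, |k s - k' s| ≤ D) :
    |(∫ s in a..b, g s * exp (∫ r in a..s, k r)) - ∫ s in a..b, g' s * exp (∫ r in a..s, k' r)|
      ≤ (A + P * (D * (b - a))) * (b - a) := by
  rw [← integral_sub ((continuousOn_mul_exp_primitive hab hg hk).intervalIntegrable_of_Icc hab)
    ((continuousOn_mul_exp_primitive hab hg' hk').intervalIntegrable_of_Icc hab)]
  refine abs_integral_le_mul_sub hab fun s hs => ?_
  have hsub : Icc a s ⊆ Icc a b := Icc_subset_Icc_right hs.2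
  have hX := integral_nonpos_of_nonpos_on hs.1 fun r hr => hk0 r (hsub hr)
  have hX' := integral_nonpos_of_nonpos_on hs.1 fun r hr => hk'0 r (hsub hr)
  have hXX' : |(∫ r in a..s, k r) - ∫ r in a..s, k' r| ≤ D * (b - a) := by
    rw [← integral_sub ((hk.mono hsub).intervalIntegrable_of_Icc hs.1)
      ((hk'.mono hsub).intervalIntegrable_of_Icc hs.1)]
    have hD0 : 0 ≤ D := (abs_nonneg _).trans (hD s hs)
    refine (abs_integral_le_mul_sub hs.1 fun r hr => hD r (hsub hr)).trans ?_
    gcongr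
    exact hs.2
  calc |g s * exp (∫ r in a..s, k r) - g' s * exp (∫ r in a..s, k' r)|
      ≤ |g s - g' s| + g' s * |(∫ r in a..s, k r) - ∫ r in a..s, k' r| :=
        abs_mul_exp_sub_mul_exp_le (hg'0 s hs) hX hX'
    _ ≤ A + P * (D * (b - a)) := by
        have hP0 : 0 ≤ P := (hg'0 s hs).trans (hP s hs)
        gcongr
        exacts [hA s hs, hP s hs]

/-- Stability of `C^{B̃}(t) = −(ε/2)∫ₜᵀ B̃(s)² exp(∫ₜˢ F^{B̃}(r) dr) ds` with respect to `B̃`: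
`‖C^{B̃} − C^{B̃′}‖_∞ ≤ (|ε|T/2)(1 + (γ̂T²/λ)‖B̃′‖_∞²)(‖B̃‖_∞ + ‖B̃′‖_∞)‖B̃ − B̃′‖_∞`. -/
theorem C_stability
    (γhat lam ε T : ℝ) (hγ : 0 < γhat) (hlam : 0 < lam) (hT : 0 < T)
    (Btil Btil' : ℝ → ℝ)
    (hB : ContinuousOn Btil (Icc 0 T)) (hB' : ContinuousOn Btil' (Icc 0 T))
    (F F' : ℝ → ℝ)
    (hFcont : ContinuousOn F (Icc 0 T)) (hF'cont : ContinuousOn F' (Icc 0 T))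
    (hFsol : ∀ t ∈ Icc (0:ℝ) T, F t = -∫ s in t..T, (γhat / lam * Btil s ^ 2 - F s ^ 2))
    (hF'sol : ∀ t ∈ Icc (0:ℝ) T, F' t = -∫ s in t..T, (γhat / lam * Btil' s ^ 2 - F' s ^ 2))
    (C C' : ℝ → ℝ)
    (hC : C = fun t => -(ε / 2) * ∫ s in t..T, Btil s ^ 2 * Real.exp (∫ r in t..s, F r))
    (hC' : C' = fun t => -(ε / 2) * ∫ s in t..T, Btil' s ^ 2 * Real.exp (∫ r in t..s, F' r)) :
    supNorm T (fun t => C t - C' t) ≤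
      |ε| * T / 2 * (1 + γhat * T ^ 2 / lam * supNorm T Btil' ^ 2) *
        (supNorm T Btil + supNorm T Btil') * supNorm T (fun u => Btil u - Btil' u) := by
  set MB := supNorm T Btil
  set MB' := supNorm T Btil'
  set MD := supNorm T (fun u => Btil u - Btil' u)
  have hMB : 0 ≤ MB := supNorm_nonneg T Btil
  have hMB' : 0 ≤ MB' := supNorm_nonneg T Btil'
  have hMD : 0 ≤ MD := supNorm_nonneg T _
  have hc : 0 ≤ γhat / lam := by positivity
  have hF0 : ∀ s ∈ Icc 0 T, F s ≤ 0 := fun s hs =>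
    riccati_nonpos (continuousOn_const.mul (hB.pow 2))
      (fun s _ => mul_nonneg hc (sq_nonneg (Btil s))) hFcont hFsol hs
  have hF'0 : ∀ s ∈ Icc 0 T, F' s ≤ 0 := fun s hs =>
    riccati_nonpos (continuousOn_const.mul (hB'.pow 2))
      (fun s _ => mul_nonneg hc (sq_nonneg (Btil' s))) hF'cont hF'sol hs
  refine supNorm_le hT.le fun t ht => ?_
  have hsub : Icc t T ⊆ Icc 0 T := Icc_subset_Icc_left ht.1
  have hint := abs_integral_mul_exp_sub_le (g := fun s => Btil s ^ 2) (g' := fun s => Btil' s ^ 2)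
    (P := MB' ^ 2) ht.2 ((hB.pow 2).mono hsub) ((hB'.pow 2).mono hsub) (hFcont.mono hsub)
    (hF'cont.mono hsub) (fun s hs => hF0 s (hsub hs)) (fun s hs => hF'0 s (hsub hs))
    (fun s _ => sq_nonneg (Btil' s))
    (fun s hs => by rw [← sq_abs]; gcongr; exact abs_le_supNorm hB' (hsub hs))
    (fun s hs => abs_sq_sub_sq_le_supNorm hB hB' (hsub hs))
    (fun s hs => riccati_abs_sub_le_supNorm hc hB hB' hFcont hF'cont hFsol hF'sol (hsub hs))
  calc |C t - C' t|
      = |ε| / 2 * |(∫ s in t..T, Btil s ^ 2 * exp (∫ r in t..s, F r))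
          - ∫ s in t..T, Btil' s ^ 2 * exp (∫ r in t..s, F' r)| := by
        rw [hC, hC', ← mul_sub, abs_mul, abs_neg, abs_div, abs_two]
    _ ≤ |ε| / 2 * (((MB + MB') * MD + MB' ^ 2 * (γhat / lam * ((MB + MB') * MD) * T * (T - t)))
          * (T - t)) := mul_le_mul_of_nonneg_left hint (by positivity)
    _ ≤ |ε| / 2 * (((MB + MB') * MD + MB' ^ 2 * (γhat / lam * ((MB + MB') * MD) * T * T)) * T) := by
        gcongr <;> linarith [ht.1, ht.2]
    _ = |ε| * T / 2 * (1 + γhat * T ^ 2 / lam * MB' ^ 2) * (MB + MB') * MD := by ring
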